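/- Let (S,F,𝒮,E,P) satisfy conditions C1-C5 and axioms A1-A2, and let S* ∈ F with P(S*) > 0 be such that X·1_{S*} ∈ 𝒮 for X ∈ 𝒮. Define E*(X|_{S*}) = E(X·1_{S*})/P(S*) and P*(B ∩ S*) = P(B ∩ S*)/P(S*). Then the restricted quintuplet (S*, F*, 𝒮*, E*, P*) satisfies C1-C5 and A1-A2, and if the original quintuplet satisfies A3, so does the restricted one. -/

import Mathlib

/-- Indicator function of a set, with value 1. -/
noncomputable def ind {S : Type*} (B : Set S) : S → ℝ := Set.indicator B (fun _ => 1)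

/-- The set function `P(B) = E(1_B)` derived from the functional `E`. -/
noncomputable def Pfun {S : Type*} (E : (S → ℝ) → ℝ) (B : Set S) : ℝ := E (ind B)

/-- `F` is an algebra of subsets of `S`. -/
def IsSetAlgebra' {S : Type*} (F : Set (Set S)) : Prop :=
  Set.univ ∈ F ∧ (∀ B ∈ F, Bᶜ ∈ F) ∧ ∀ A ∈ F, ∀ B ∈ F, A ∪ B ∈ F

/-- C1: the function space is closed under linear combinations. -/
def CondC1 {S : Type*} (Sp : Set (S → ℝ)) : Prop :=
  ∀ X ∈ Sp, ∀ Y ∈ Sp, ∀ a b : ℝ, (fun s => a * X s + b * Y s) ∈ Sp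

/-- C2: indicators of sets in `F` belong to the function space. -/
def CondC2 {S : Type*} (F : Set (Set S)) (Sp : Set (S → ℝ)) : Prop :=
  ∀ B ∈ F, ind B ∈ Sp

/-- C3: preimages of intervals under members of the space belong to `F`. -/
def CondC3 {S : Type*} (F : Set (Set S)) (Sp : Set (S → ℝ)) : Prop :=
  ∀ X ∈ Sp, ∀ J : Set ℝ, J.OrdConnected → {s | X s ∈ J} ∈ F

/-- C4: truncation closure for nonnegative functions. -/
def CondC4 {S : Type*} (Sp : Set (S → ℝ)) : Prop :=
  ∀ X ∈ Sp, (∀ s, 0 ≤ X s) → ∀ J : Set ℝ, J.OrdConnected →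
    (fun s => X s * ind {t | X t ∈ J} s) ∈ Sp

/-- C5: null-set condition. -/
def CondC5 {S : Type*} (F : Set (Set S)) (Sp : Set (S → ℝ)) (E : (S → ℝ) → ℝ) : Prop :=
  ∀ X ∈ Sp, ∀ N ∈ F, Pfun E N = 0 →
    (fun s => X s * ind N s) ∈ Sp ∧ E (fun s => X s * ind N s) = 0

/-- A1: `E` of a constant equals that constant. -/
def AxA1 {S : Type*} (E : (S → ℝ) → ℝ) : Prop := ∀ c : ℝ, E (fun _ => c) = c

/-- A2: linearity of `E` on the function space. -/
def AxA2 {S : Type*} (Sp : Set (S → ℝ)) (E : (S → ℝ) → ℝ) : Prop :=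
  ∀ X ∈ Sp, ∀ Y ∈ Sp, ∀ a b : ℝ, E (fun s => a * X s + b * Y s) = a * E X + b * E Y

/-- A3: if `E X = 0` then either `P(X = 0) = 1` or `X` changes sign. -/
def AxA3 {S : Type*} (Sp : Set (S → ℝ)) (E : (S → ℝ) → ℝ) : Prop :=
  ∀ X ∈ Sp, E X = 0 → Pfun E {s | X s = 0} = 1 ∨ ∃ s₁ s₂, X s₁ * X s₂ < 0

/-- A3': if `X ≥ 0` everywhere and `E X = 0` then `P(X = 0) = 1`. -/
def AxA3' {S : Type*} (Sp : Set (S → ℝ)) (E : (S → ℝ) → ℝ) : Prop :=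
  ∀ X ∈ Sp, (∀ s, 0 ≤ X s) → E X = 0 → Pfun E {s | X s = 0} = 1

/-! Everything transfers from `(S, F, 𝒮, E)` along `Subtype.val : S* → S`: sets and functions
are pulled back, and a function `X|_{S*}` is evaluated through its extension by zero
`X · 1_{S*} ∈ 𝒮`. Conditions C1-C3 and A2 transfer formally. For C4, C5 and A1 one computes
with `X · 1_{S*}`, and `P*(B ∩ S*) = P(B ∩ S*)/P(S*)` turns null sets of `P*` into null sets
of `P`. For A3, `{X · 1_{S*} = 0}` is the disjoint union of `{X = 0} ∩ S*` and `S*ᶜ`, so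
`P(X · 1_{S*} = 0) = 1` forces `P({X = 0} ∩ S*) = P(S*)`, that is `P*(X = 0) = 1`. -/

open Set

section Indicator

variable {S T : Type*}

lemma ind_mul_ind (A B : Set S) (s : S) : ind A s * ind B s = ind (A ∩ B) s := by
  by_cases hA : s ∈ A <;> by_cases hB : s ∈ B <;> simp [ind, hA, hB]

lemma ind_preimage (f : T → S) (B : Set S) : ind (f ⁻¹' B) = fun t => ind B (f t) := by
  funext t
  by_cases h : f t ∈ B <;> simp [ind, h]

lemma mul_ind_of_mem (X : S → ℝ) {A : Set S} {s : S} (h : s ∈ A) : X s * ind A s = X s := by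
  simp [ind, h]

lemma mul_ind_of_notMem (X : S → ℝ) {A : Set S} {s : S} (h : s ∉ A) : X s * ind A s = 0 := by
  simp [ind, h]

lemma setOf_mul_ind_eq_zero (X : S → ℝ) (A : Set S) :
    {s | X s * ind A s = 0} = {s | X s = 0} ∩ A ∪ Aᶜ := by
  ext s
  by_cases h : s ∈ A <;> simp [ind, h]

lemma mem_and_mem_and_mul_neg_of_mul_ind {X : S → ℝ} {A : Set S} {s₁ s₂ : S}
    (h : X s₁ * ind A s₁ * (X s₂ * ind A s₂) < 0) : s₁ ∈ A ∧ s₂ ∈ A ∧ X s₁ * X s₂ < 0 := by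
  by_cases h₁ : s₁ ∈ A <;> by_cases h₂ : s₂ ∈ A <;> simp_all [ind]

end Indicator

section Pullback

variable {S T : Type*}

def comapSets (f : T → S) (F : Set (Set S)) : Set (Set T) := {A | ∃ B ∈ F, A = f ⁻¹' B}

def comapFuns (f : T → S) (Sp : Set (S → ℝ)) : Set (T → ℝ) :=
  {Y | ∃ X ∈ Sp, Y = fun t => X (f t)}

lemma IsSetAlgebra'.inter_mem {F : Set (Set S)} (hF : IsSetAlgebra' F) {A B : Set S}
    (hA : A ∈ F) (hB : B ∈ F) : A ∩ B ∈ F := by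
  simpa [compl_union] using hF.2.1 _ (hF.2.2 _ (hF.2.1 _ hA) _ (hF.2.1 _ hB))

lemma IsSetAlgebra'.comap {F : Set (Set S)} (hF : IsSetAlgebra' F) (f : T → S) :
    IsSetAlgebra' (comapSets f F) := by
  refine ⟨⟨univ, hF.1, rfl⟩, ?_, ?_⟩
  · rintro _ ⟨B, hB, rfl⟩
    exact ⟨Bᶜ, hF.2.1 _ hB, rfl⟩
  · rintro _ ⟨A, hA, rfl⟩ _ ⟨B, hB, rfl⟩
    exact ⟨A ∪ B, hF.2.2 _ hA _ hB, rfl⟩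

lemma CondC1.comap {Sp : Set (S → ℝ)} (hC1 : CondC1 Sp) (f : T → S) :
    CondC1 (comapFuns f Sp) := by
  rintro _ ⟨X, hX, rfl⟩ _ ⟨Y, hY, rfl⟩ a b
  exact ⟨_, hC1 _ hX _ hY a b, rfl⟩

lemma CondC2.comap {F : Set (Set S)} {Sp : Set (S → ℝ)} (hC2 : CondC2 F Sp) (f : T → S) :
    CondC2 (comapSets f F) (comapFuns f Sp) := by
  rintro _ ⟨B, hB, rfl⟩
  exact ⟨ind B, hC2 _ hB, ind_preimage f B⟩

lemma CondC3.comap {F : Set (Set S)} {Sp : Set (S → ℝ)} (hC3 : CondC3 F Sp) (f : T → S) :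
    CondC3 (comapSets f F) (comapFuns f Sp) := by
  rintro _ ⟨X, hX, rfl⟩ J hJ
  exact ⟨{s | X s ∈ J}, hC3 _ hX J hJ, rfl⟩

end Pullback

section Expectation

variable {S : Type*} {F : Set (Set S)} {Sp : Set (S → ℝ)} {E : (S → ℝ) → ℝ}

lemma const_mem (hF : IsSetAlgebra' F) (hC1 : CondC1 Sp) (hC2 : CondC2 F Sp) (c : ℝ) :
    (fun _ : S => c) ∈ Sp := by
  have h := hC1 _ (hC2 _ hF.1) _ (hC2 _ hF.1) c 0
  simpa [ind] using h

lemma expect_mul_ind (hC2 : CondC2 F Sp) (hA2 : AxA2 Sp E) {B : Set S} (hB : B ∈ F) (c : ℝ) :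
    E (fun s => c * ind B s) = c * Pfun E B := by
  simpa [Pfun] using hA2 _ (hC2 _ hB) _ (hC2 _ hB) c 0

lemma pfun_union_of_disjoint (hC2 : CondC2 F Sp) (hA2 : AxA2 Sp E) {A B : Set S}
    (hA : A ∈ F) (hB : B ∈ F) (hAB : Disjoint A B) :
    Pfun E (A ∪ B) = Pfun E A + Pfun E B := by
  have hind : ind (A ∪ B) = fun s => 1 * ind A s + 1 * ind B s := by
    funext s
    simp [ind, indicator_union_of_disjoint hAB]
  simpa [Pfun, hind] using hA2 _ (hC2 _ hA) _ (hC2 _ hB) 1 1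

lemma pfun_compl (hF : IsSetAlgebra' F) (hC2 : CondC2 F Sp) (hA1 : AxA1 E) (hA2 : AxA2 Sp E)
    {B : Set S} (hB : B ∈ F) : Pfun E Bᶜ = 1 - Pfun E B := by
  have hunion := pfun_union_of_disjoint hC2 hA2 hB (hF.2.1 _ hB) disjoint_compl_right
  have huniv : Pfun E univ = 1 := by simpa [Pfun, ind] using hA1 1
  rw [union_compl_self, huniv] at hunion
  linarith

end Expectation

section Restriction

variable {S : Type*} {F : Set (Set S)} {Sp : Set (S → ℝ)} {E : (S → ℝ) → ℝ}
  {Sstar : Set S} {Estar : (↥Sstar → ℝ) → ℝ}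

lemma pfun_restrict (hC2 : CondC2 F Sp)
    (hEstar : ∀ X ∈ Sp,
      Estar (fun s => X s.val) = E (fun s => X s * ind Sstar s) / Pfun E Sstar)
    {B : Set S} (hB : B ∈ F) :
    Pfun Estar (Subtype.val ⁻¹' B) = Pfun E (B ∩ Sstar) / Pfun E Sstar := by
  have h := hEstar (ind B) (hC2 _ hB)
  simp only [ind_mul_ind] at h
  rw [Pfun, ind_preimage, h]
  rfl

lemma CondC4.restrict (hC4 : CondC4 Sp)
    (hSstarCl : ∀ X ∈ Sp, (fun s => X s * ind Sstar s) ∈ Sp) :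
    CondC4 (comapFuns (Subtype.val : Sstar → S) Sp) := by
  rintro _ ⟨X, hX, rfl⟩ hpos J hJ
  have hext_nonneg : ∀ s, 0 ≤ X s * ind Sstar s := by
    intro s
    by_cases h : s ∈ Sstar
    · rw [mul_ind_of_mem X h]
      exact hpos ⟨s, h⟩
    · rw [mul_ind_of_notMem X h]
  have hset : {t : ↥Sstar | X t ∈ J} = Subtype.val ⁻¹' {t | X t * ind Sstar t ∈ J} := by
    ext t
    simp only [mem_ofPred_eq, mem_preimage, mul_ind_of_mem X t.2]
  refine ⟨_, hC4 _ (hSstarCl X hX) hext_nonneg J hJ, ?_⟩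
  funext s
  rw [hset, ind_preimage, mul_ind_of_mem X s.2]

lemma CondC5.restrict (hF : IsSetAlgebra' F) (hC2 : CondC2 F Sp) (hC5 : CondC5 F Sp E)
    (hSstarF : Sstar ∈ F) (hSstarP : Pfun E Sstar ≠ 0)
    (hEstar : ∀ X ∈ Sp,
      Estar (fun s => X s.val) = E (fun s => X s * ind Sstar s) / Pfun E Sstar) :
    CondC5 (comapSets Subtype.val F) (comapFuns Subtype.val Sp) Estar := by
  rintro _ ⟨X, hX, rfl⟩ _ ⟨N, hN, rfl⟩ hnull
  have hPnull : Pfun E (N ∩ Sstar) = 0 := by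
    rwa [pfun_restrict hC2 hEstar hN, div_eq_zero_iff, or_iff_left hSstarP] at hnull
  obtain ⟨hZ, hEZ⟩ := hC5 X hX _ (hF.inter_mem hN hSstarF) hPnull
  have hrestrict : (fun s : ↥Sstar => X s.val * ind (Subtype.val ⁻¹' N) s)
      = fun s => X s.val * ind (N ∩ Sstar) s.val := by
    funext s
    rw [← ind_mul_ind, mul_ind_of_mem _ s.2, ind_preimage]
  have hext : (fun s => X s * ind (N ∩ Sstar) s * ind Sstar s)
      = fun s => X s * ind (N ∩ Sstar) s := by
    funext s
    rw [mul_assoc, ind_mul_ind, inter_assoc, inter_self]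
  refine ⟨hrestrict ▸ ⟨_, hZ, rfl⟩, ?_⟩
  rw [hrestrict, hEstar _ hZ, hext, hEZ, zero_div]

lemma AxA1.restrict (hF : IsSetAlgebra' F) (hC1 : CondC1 Sp) (hC2 : CondC2 F Sp)
    (hA2 : AxA2 Sp E) (hSstarF : Sstar ∈ F) (hSstarP : Pfun E Sstar ≠ 0)
    (hEstar : ∀ X ∈ Sp,
      Estar (fun s => X s.val) = E (fun s => X s * ind Sstar s) / Pfun E Sstar) :
    AxA1 Estar := by
  intro c
  rw [hEstar _ (const_mem hF hC1 hC2 c), expect_mul_ind hC2 hA2 hSstarF,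
    mul_div_cancel_right₀ _ hSstarP]

lemma AxA2.restrict (hC1 : CondC1 Sp) (hA2 : AxA2 Sp E)
    (hSstarCl : ∀ X ∈ Sp, (fun s => X s * ind Sstar s) ∈ Sp)
    (hEstar : ∀ X ∈ Sp,
      Estar (fun s => X s.val) = E (fun s => X s * ind Sstar s) / Pfun E Sstar) :
    AxA2 (comapFuns Subtype.val Sp) Estar := by
  rintro _ ⟨X, hX, rfl⟩ _ ⟨Y, hY, rfl⟩ a b
  have hext : (fun s => (a * X s + b * Y s) * ind Sstar s)
      = fun s => a * (X s * ind Sstar s) + b * (Y s * ind Sstar s) := by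
    funext s; ring
  rw [hEstar _ (hC1 _ hX _ hY a b), hext, hA2 _ (hSstarCl X hX) _ (hSstarCl Y hY),
    hEstar X hX, hEstar Y hY]
  ring

lemma AxA3.restrict (hF : IsSetAlgebra' F) (hC2 : CondC2 F Sp) (hC3 : CondC3 F Sp)
    (hA1 : AxA1 E) (hA2 : AxA2 Sp E) (hA3 : AxA3 Sp E)
    (hSstarF : Sstar ∈ F) (hSstarP : Pfun E Sstar ≠ 0)
    (hSstarCl : ∀ X ∈ Sp, (fun s => X s * ind Sstar s) ∈ Sp)
    (hEstar : ∀ X ∈ Sp,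
      Estar (fun s => X s.val) = E (fun s => X s * ind Sstar s) / Pfun E Sstar) :
    AxA3 (comapFuns Subtype.val Sp) Estar := by
  rintro _ ⟨X, hX, rfl⟩ hE0
  have hext0 : E (fun s => X s * ind Sstar s) = 0 := by
    rwa [hEstar X hX, div_eq_zero_iff, or_iff_left hSstarP] at hE0
  rcases hA3 _ (hSstarCl X hX) hext0 with hzero | ⟨s₁, s₂, hsign⟩
  · left
    have hXF : {s | X s = 0} ∈ F := by
      simpa using hC3 X hX {0} ordConnected_singleton
    have hXSF := hF.inter_mem hXF hSstarF
    rw [setOf_mul_ind_eq_zero,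
      pfun_union_of_disjoint hC2 hA2 hXSF (hF.2.1 _ hSstarF)
        (disjoint_compl_right.mono_left inter_subset_right),
      pfun_compl hF hC2 hA1 hA2 hSstarF] at hzero
    change Pfun Estar (Subtype.val ⁻¹' {s | X s = 0}) = 1
    rw [pfun_restrict hC2 hEstar hXF, div_eq_one_iff_eq hSstarP]
    linarith
  · right
    obtain ⟨h₁, h₂, hneg⟩ := mem_and_mem_and_mul_neg_of_mul_ind hsign
    exact ⟨⟨s₁, h₁⟩, ⟨s₂, h₂⟩, hneg⟩

end Restriction

theorem hereditary_property_general (S : Type*)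
    (F : Set (Set S)) (Sp : Set (S → ℝ)) (E : (S → ℝ) → ℝ)
    (hF : IsSetAlgebra' F) (hC1 : CondC1 Sp) (hC2 : CondC2 F Sp)
    (hC3 : CondC3 F Sp) (hC4 : CondC4 Sp) (hC5 : CondC5 F Sp E)
    (hA1 : AxA1 E) (hA2 : AxA2 Sp E)
    (Sstar : Set S) (hSstarF : Sstar ∈ F) (hSstarP : 0 < Pfun E Sstar)
    (hSstarCl : ∀ X ∈ Sp, (fun s => X s * ind Sstar s) ∈ Sp)
    (Estar : (↥Sstar → ℝ) → ℝ)
    (hEstar : ∀ X ∈ Sp,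
      Estar (fun s => X s.val) = E (fun s => X s * ind Sstar s) / Pfun E Sstar) :
    let Fstar : Set (Set ↥Sstar) := {A | ∃ B ∈ F, A = Subtype.val ⁻¹' B}
    let Spstar : Set (↥Sstar → ℝ) := {Y | ∃ X ∈ Sp, Y = fun s => X s.val}
    (∀ B ∈ F, Pfun Estar (Subtype.val ⁻¹' B) = Pfun E (B ∩ Sstar) / Pfun E Sstar) ∧
    IsSetAlgebra' Fstar ∧ CondC1 Spstar ∧ CondC2 Fstar Spstar ∧ CondC3 Fstar Spstar ∧
    CondC4 Spstar ∧ CondC5 Fstar Spstar Estar ∧ AxA1 Estar ∧ AxA2 Spstar Estar ∧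
    (AxA3 Sp E → AxA3 Spstar Estar) := by
  have hP := hSstarP.ne'
  exact ⟨fun _ hB => pfun_restrict hC2 hEstar hB,
    hF.comap Subtype.val, hC1.comap Subtype.val, hC2.comap Subtype.val,
    hC3.comap Subtype.val, hC4.restrict hSstarCl,
    hC5.restrict hF hC2 hSstarF hP hEstar, AxA1.restrict hF hC1 hC2 hA2 hSstarF hP hEstar,
    hA2.restrict hC1 hSstarCl hEstar,
    fun hA3 => hA3.restrict hF hC2 hC3 hA1 hA2 hSstarF hP hSstarCl hEstar⟩

/-- Remark 2.4 (hereditary property): restricting a quintuplet `(S, F, 𝒮, E, P)`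
satisfying C1-C5 and A1-A2 to a set `S* ∈ F` with `P(S*) > 0`, with
`E*(X|_{S*}) = E(X·1_{S*})/P(S*)` and `P*(B ∩ S*) = P(B ∩ S*)/P(S*)`, yields a
quintuplet `(S*, F*, 𝒮*, E*, P*)` which again satisfies C1-C5 and A1-A2, and which
satisfies A3 whenever the original quintuplet does. -/
theorem hereditary_property (S : Type*) [Nonempty S]
    (F : Set (Set S)) (Sp : Set (S → ℝ)) (E : (S → ℝ) → ℝ)
    (hF : IsSetAlgebra' F) (hC1 : CondC1 Sp) (hC2 : CondC2 F Sp)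
    (hC3 : CondC3 F Sp) (hC4 : CondC4 Sp) (hC5 : CondC5 F Sp E)
    (hA1 : AxA1 E) (hA2 : AxA2 Sp E)
    (Sstar : Set S) (hSstarF : Sstar ∈ F) (hSstarP : 0 < Pfun E Sstar)
    (hSstarCl : ∀ X ∈ Sp, (fun s => X s * ind Sstar s) ∈ Sp)
    (Estar : (↥Sstar → ℝ) → ℝ)
    (hEstar : ∀ X ∈ Sp,
      Estar (fun s => X s.val) = E (fun s => X s * ind Sstar s) / Pfun E Sstar) :
    let Fstar : Set (Set ↥Sstar) := {A | ∃ B ∈ F, A = Subtype.val ⁻¹' B}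
    let Spstar : Set (↥Sstar → ℝ) := {Y | ∃ X ∈ Sp, Y = fun s => X s.val}
    (∀ B ∈ F, Pfun Estar (Subtype.val ⁻¹' B) = Pfun E (B ∩ Sstar) / Pfun E Sstar) ∧
    IsSetAlgebra' Fstar ∧ CondC1 Spstar ∧ CondC2 Fstar Spstar ∧ CondC3 Fstar Spstar ∧
    CondC4 Spstar ∧ CondC5 Fstar Spstar Estar ∧ AxA1 Estar ∧ AxA2 Spstar Estar ∧
    (AxA3 Sp E → AxA3 Spstar Estar) :=
  hereditary_property_general S F Sp E hF hC1 hC2 hC3 hC4 hC5 hA1 hA2 Sstar hSstarF hSstarP hSstarCl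
    Estar hEstar
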